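/- In the network setup, let φ_h be a profile for each h ∈ H, and define the parabolic flux F_h(u,p) = f_h(u) − D_h(u)·p. Then the following are equivalent: (a) for almost every t ∈ ℝ and every j ∈ J, F_j(φ_j(−c_j t), φ_j′(−c_j t)) = Σ_{i∈I} α_{i,j} F_i(φ_i(−c_i t), φ_i′(−c_i t)); (b) for every t ∈ ℝ and every j ∈ J, c_j φ_j(c_j t) + g_j(ℓ_j⁻) = Σ_{i∈I} α_{i,j} [c_i φ_i(c_i t) + g_i(ℓ_i⁻)] (the coupling condition (Tool)). Moreover, in (b) any occurrence of g_h(ℓ_h⁻) may be replaced by g_h(ℓ_h⁺), since g_h(ℓ_h⁺) = g_h(ℓ_h⁻) for every h ∈ H. -/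

import Mathlib

/-!
Along a profile the parabolic flux `f(φ) - D(φ) φ'` equals `c φ + g(ℓ⁻)` everywhere: on `I` this
is the profile equation, and off `I` the profile is at its minimum or maximum, where `φ' = 0`.
Hence (a) says that the two continuous sides of (Tool), evaluated at `-t`, agree almost
everywhere, and continuous functions that agree almost everywhere agree everywhere.
`g(ℓ⁺) = g(ℓ⁻)` is the choice of `c` as the slope of the chord.
-/

open Set Filter MeasureTheory
open scoped Topology Classical

/-- Assumption (f): `f ∈ C¹([0,1];ℝ)` is nonnegative, strictly concave, `f 0 = f 1 = 0`. -/
def FluxAssumption (f : ℝ → ℝ) : Prop :=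
  ContDiffOn ℝ 1 f (Icc 0 1) ∧ StrictConcaveOn ℝ (Icc 0 1) f ∧
  (∀ x ∈ Icc (0:ℝ) 1, 0 ≤ f x) ∧ f 0 = 0 ∧ f 1 = 0

/-- Assumption (D): `D ∈ C¹([0,1];ℝ)` is nonnegative and positive on `(0,1)`. -/
def DiffAssumption (D : ℝ → ℝ) : Prop :=
  ContDiffOn ℝ 1 D (Icc 0 1) ∧ (∀ x ∈ Icc (0:ℝ) 1, 0 ≤ D x) ∧
  (∀ x ∈ Ioo (0:ℝ) 1, 0 < D x)

/-- The wave speed `c = (f(ℓ⁺) - f(ℓ⁻))/(ℓ⁺ - ℓ⁻)`. -/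
noncomputable def waveSpeed (f : ℝ → ℝ) (a b : ℝ) : ℝ := (f b - f a) / (b - a)

/-- The reduced flux `g(ρ) = f(ρ) - c ρ`. -/
noncomputable def redFlux (f : ℝ → ℝ) (a b ρ : ℝ) : ℝ := f ρ - waveSpeed f a b * ρ

/-- A profile for data `f, D, ℓ⁻ = a, ℓ⁺ = b`: continuous, non-decreasing, with values in
`[a,b]`, limits `a` at `-∞` and `b` at `+∞`, `C²` on `I = {ξ | a < φ ξ < b}` with positive
derivative there, satisfying `D(φ) φ' = g(φ) - g(a)` on `I`. -/
def IsProfile (f D : ℝ → ℝ) (a b : ℝ) (φ : ℝ → ℝ) : Prop :=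
  Continuous φ ∧ Monotone φ ∧ (∀ ξ, φ ξ ∈ Icc a b) ∧
  Tendsto φ atBot (𝓝 a) ∧ Tendsto φ atTop (𝓝 b) ∧
  ContDiffOn ℝ 2 φ {ξ | a < φ ξ ∧ φ ξ < b} ∧
  ∀ ξ, a < φ ξ → φ ξ < b →
    0 < deriv φ ξ ∧ D (φ ξ) * deriv φ ξ = redFlux f a b (φ ξ) - redFlux f a b a

/-- Speed of road `h` given end–state functions. -/
noncomputable def spd {H : Type*} (f : H → ℝ → ℝ) (lm lp : H → ℝ) (h : H) : ℝ :=
  waveSpeed (f h) (lm h) (lp h)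

/-- Reduced flux of road `h` given end–state functions. -/
noncomputable def gred {H : Type*} (f : H → ℝ → ℝ) (lm lp : H → ℝ) (h : H) (ρ : ℝ) : ℝ :=
  redFlux (f h) (lm h) (lp h) ρ

/-- The network setup: flux/diffusivity assumptions on each road, and coefficients
`α i j ∈ (0,1]` with unit row sums. -/
def NetworkSetup {m n : ℕ} (f D : Fin m ⊕ Fin n → ℝ → ℝ) (α : Fin m → Fin n → ℝ) : Prop :=
  (∀ h, FluxAssumption (f h)) ∧ (∀ h, DiffAssumption (D h)) ∧
  (∀ i j, α i j ∈ Ioc (0:ℝ) 1) ∧ (∀ i, ∑ j, α i j = 1)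

/-- Admissible end states: `0 ≤ ℓ_h⁻ < ℓ_h⁺ ≤ 1` for every road. -/
def EndStates {H : Type*} (lm lp : H → ℝ) : Prop :=
  ∀ h, 0 ≤ lm h ∧ lm h < lp h ∧ lp h ≤ 1

/-- The coupling condition (Tool):
`c_j φ_j(c_j t) + g_j(ℓ_j⁻) = ∑_i α_{i,j} (c_i φ_i(c_i t) + g_i(ℓ_i⁻))` for all `t, j`. -/
def Tool {m n : ℕ} (f : Fin m ⊕ Fin n → ℝ → ℝ) (α : Fin m → Fin n → ℝ)
    (lm lp : Fin m ⊕ Fin n → ℝ) (φ : Fin m ⊕ Fin n → ℝ → ℝ) : Prop :=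
  ∀ t : ℝ, ∀ j : Fin n,
    spd f lm lp (Sum.inr j) * φ (Sum.inr j) (spd f lm lp (Sum.inr j) * t)
      + gred f lm lp (Sum.inr j) (lm (Sum.inr j))
    = ∑ i : Fin m, α i j *
        (spd f lm lp (Sum.inl i) * φ (Sum.inl i) (spd f lm lp (Sum.inl i) * t)
          + gred f lm lp (Sum.inl i) (lm (Sum.inl i)))

/-- A traveling wave of the network problem at profile level: a family of profiles
satisfying the coupling condition (Tool). -/
def IsTravelingWave {m n : ℕ} (f D : Fin m ⊕ Fin n → ℝ → ℝ) (α : Fin m → Fin n → ℝ)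
    (lm lp : Fin m ⊕ Fin n → ℝ) (φ : Fin m ⊕ Fin n → ℝ → ℝ) : Prop :=
  (∀ h, IsProfile (f h) (D h) (lm h) (lp h) (φ h)) ∧ Tool f α lm lp φ

/-- `L_{i,j}⁻`: `ℓ_i⁻` if `c_i c_j ≥ 0`, and `ℓ_i⁺` otherwise. -/
noncomputable def Lminus {m n : ℕ} (f : Fin m ⊕ Fin n → ℝ → ℝ)
    (lm lp : Fin m ⊕ Fin n → ℝ) (i : Fin m) (j : Fin n) : ℝ :=
  if 0 ≤ spd f lm lp (Sum.inl i) * spd f lm lp (Sum.inr j) then lm (Sum.inl i)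
  else lp (Sum.inl i)

/-- `L_{i,j}⁺`: `ℓ_i⁺` if `c_i c_j ≥ 0`, and `ℓ_i⁻` otherwise. -/
noncomputable def Lplus {m n : ℕ} (f : Fin m ⊕ Fin n → ℝ → ℝ)
    (lm lp : Fin m ⊕ Fin n → ℝ) (i : Fin m) (j : Fin n) : ℝ :=
  if 0 ≤ spd f lm lp (Sum.inl i) * spd f lm lp (Sum.inr j) then lp (Sum.inl i)
  else lm (Sum.inl i)

/-- `k_j = ∑_{i ∈ I₀ᶜ} A_{i,j} L_{i,j}⁻ - ℓ_j⁻` with `A_{i,j} = α_{i,j} c_i / c_j`. -/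
noncomputable def kconst {m n : ℕ} (f : Fin m ⊕ Fin n → ℝ → ℝ) (α : Fin m → Fin n → ℝ)
    (lm lp : Fin m ⊕ Fin n → ℝ) (j : Fin n) : ℝ :=
  (∑ i ∈ Finset.univ.filter (fun i : Fin m => spd f lm lp (Sum.inl i) ≠ 0),
      (α i j * (spd f lm lp (Sum.inl i) / spd f lm lp (Sum.inr j))) * Lminus f lm lp i j)
    - lm (Sum.inr j)

lemma redFlux_right_eq_left (f : ℝ → ℝ) (a b : ℝ) :
    redFlux f a b b = redFlux f a b a := by
  rcases eq_or_ne a b with rfl | hab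
  · rfl
  have : b - a ≠ 0 := sub_ne_zero.mpr hab.symm
  simp only [redFlux, waveSpeed]
  field_simp
  ring

lemma IsProfile.flux_eq {f D φ : ℝ → ℝ} {a b : ℝ} (hφ : IsProfile f D a b φ) (ξ : ℝ) :
    f (φ ξ) - D (φ ξ) * deriv φ ξ = waveSpeed f a b * φ ξ + redFlux f a b a := by
  obtain ⟨-, -, hrange, -, -, -, hode⟩ := hφ
  rcases (hrange ξ).1.lt_or_eq with ha | ha
  · rcases (hrange ξ).2.lt_or_eq with hb | hb
    · have := (hode ξ ha hb).2
      simp only [redFlux] at this ⊢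
      linarith
    · have hmax : IsLocalMax φ ξ := Eventually.of_forall fun x => hb ▸ (hrange x).2
      have hgb := redFlux_right_eq_left f a b
      rw [hmax.deriv_eq_zero, hb]
      simp only [redFlux] at hgb ⊢
      linarith
  · have hmin : IsLocalMin φ ξ := Eventually.of_forall fun x => ha ▸ (hrange x).1
    rw [hmin.deriv_eq_zero, ← ha]
    simp only [redFlux]
    ring

lemma Continuous.ae_eq_iff_forall_eq {X Y : Type*} [TopologicalSpace X] [MeasurableSpace X]
    [OpensMeasurableSpace X] [TopologicalSpace Y] [T2Space Y] {μ : Measure X} [μ.IsOpenPosMeasure]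
    {u v : X → Y} (hu : Continuous u) (hv : Continuous v) :
    (∀ᵐ x ∂μ, u x = v x) ↔ ∀ x, u x = v x :=
  (hu.ae_eq_iff_eq μ hv).trans funext_iff

theorem stmt6_general (m n : ℕ)
    (f D : Fin m ⊕ Fin n → ℝ → ℝ) (α : Fin m → Fin n → ℝ)
    (lm lp : Fin m ⊕ Fin n → ℝ)
    (φ : Fin m ⊕ Fin n → ℝ → ℝ)
    (hφ : ∀ h, IsProfile (f h) (D h) (lm h) (lp h) (φ h)) :
    ((∀ᵐ t ∂(volume : Measure ℝ), ∀ j : Fin n,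
        f (Sum.inr j) (φ (Sum.inr j) (-(spd f lm lp (Sum.inr j)) * t))
          - D (Sum.inr j) (φ (Sum.inr j) (-(spd f lm lp (Sum.inr j)) * t))
            * deriv (φ (Sum.inr j)) (-(spd f lm lp (Sum.inr j)) * t)
        = ∑ i : Fin m, α i j *
            (f (Sum.inl i) (φ (Sum.inl i) (-(spd f lm lp (Sum.inl i)) * t))
              - D (Sum.inl i) (φ (Sum.inl i) (-(spd f lm lp (Sum.inl i)) * t))
                * deriv (φ (Sum.inl i)) (-(spd f lm lp (Sum.inl i)) * t))) ↔
      Tool f α lm lp φ) ∧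
    (∀ h, gred f lm lp h (lp h) = gred f lm lp h (lm h)) := by
  refine ⟨?_, fun h => redFlux_right_eq_left (f h) (lm h) (lp h)⟩
  have hflux : ∀ h ξ, f h (φ h ξ) - D h (φ h ξ) * deriv (φ h) ξ
      = spd f lm lp h * φ h ξ + gred f lm lp h (lm h) := fun h => (hφ h).flux_eq
  have hcont : ∀ h, Continuous (φ h) := fun h => (hφ h).1
  simp only [hflux, neg_mul, ← mul_neg]
  rw [ae_all_iff, Tool, forall_comm]
  refine forall_congr' fun j => ?_
  rw [neg_surjective.forall]
  exact Continuous.ae_eq_iff_forall_eq (by fun_prop) (by fun_prop)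

/-- Equivalence of the a.e. parabolic-flux coupling with the coupling condition (Tool),
together with `g_h(ℓ_h⁺) = g_h(ℓ_h⁻)`. -/
theorem stmt6 (m n : ℕ) (hm : 0 < m) (hn : 0 < n)
    (f D : Fin m ⊕ Fin n → ℝ → ℝ) (α : Fin m → Fin n → ℝ)
    (hnet : NetworkSetup f D α)
    (lm lp : Fin m ⊕ Fin n → ℝ) (hends : EndStates lm lp)
    (φ : Fin m ⊕ Fin n → ℝ → ℝ)
    (hφ : ∀ h, IsProfile (f h) (D h) (lm h) (lp h) (φ h)) :
    ((∀ᵐ t ∂(volume : Measure ℝ), ∀ j : Fin n,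
        f (Sum.inr j) (φ (Sum.inr j) (-(spd f lm lp (Sum.inr j)) * t))
          - D (Sum.inr j) (φ (Sum.inr j) (-(spd f lm lp (Sum.inr j)) * t))
            * deriv (φ (Sum.inr j)) (-(spd f lm lp (Sum.inr j)) * t)
        = ∑ i : Fin m, α i j *
            (f (Sum.inl i) (φ (Sum.inl i) (-(spd f lm lp (Sum.inl i)) * t))
              - D (Sum.inl i) (φ (Sum.inl i) (-(spd f lm lp (Sum.inl i)) * t))
                * deriv (φ (Sum.inl i)) (-(spd f lm lp (Sum.inl i)) * t))) ↔
      Tool f α lm lp φ) ∧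
    (∀ h, gred f lm lp h (lp h) = gred f lm lp h (lm h)) :=
  stmt6_general m n f D α lm lp φ hφ
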